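/- If a ℂ⁴-valued function f̃ on the forward light cone satisfies p^μ f̃_μ(p) = 0 (Minkowski-transversality) at a point p with r = |𝐩| > 0, then in the orthonormal eigenbasis decomposition f̃(p) = a w₁⁺(p) + b w₁⁻(p) + c w_{r⁻²}(p) + d w_{r²}(p) one has -⟨f̃(p), 𝔍 f̃(p)⟩_{ℂ⁴} = |a|² + |b|², where 𝔍 = diag(-1,1,1,1). In particular -⟨f̃(p), 𝔍 f̃(p)⟩_{ℂ⁴} ≥ 0. -/
import Mathlib


open scoped ComplexOrder

noncomputable section

/-- `r = |𝐩|` for `p = (p⁰, p¹, p², p³)`. -/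
def rr (p : Fin 4 → ℝ) : ℝ := Real.sqrt ((p 1) ^ 2 + (p 2) ^ 2 + (p 3) ^ 2)

/-- `ρ = √((p¹)² + (p²)²)`. -/
def rho (p : Fin 4 → ℝ) : ℝ := Real.sqrt ((p 1) ^ 2 + (p 2) ^ 2)

/-- `w₁⁺(p)` as a vector of `ℂ⁴`. -/
def w1plus (p : Fin 4 → ℝ) : Fin 4 → ℂ :=
  ![0, (p 2 / rho p : ℝ), (-(p 1) / rho p : ℝ), 0]

/-- `w₁⁻(p)` as a vector of `ℂ⁴`. -/
def w1minus (p : Fin 4 → ℝ) : Fin 4 → ℂ :=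
  ![0, (p 1 * p 3 / (rho p * rr p) : ℝ), (p 2 * p 3 / (rho p * rr p) : ℝ),
    (-(rho p) / rr p : ℝ)]

/-- `w_{r⁻²}(p)` as a vector of `ℂ⁴`. -/
def wrinv (p : Fin 4 → ℝ) : Fin 4 → ℂ :=
  ![(1 / Real.sqrt 2 : ℝ), (p 1 / (Real.sqrt 2 * rr p) : ℝ),
    (p 2 / (Real.sqrt 2 * rr p) : ℝ), (p 3 / (Real.sqrt 2 * rr p) : ℝ)]

/-- `w_{r²}(p)` as a vector of `ℂ⁴`. -/
def wr (p : Fin 4 → ℝ) : Fin 4 → ℂ :=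
  ![(1 / Real.sqrt 2 : ℝ), (-(p 1) / (Real.sqrt 2 * rr p) : ℝ),
    (-(p 2) / (Real.sqrt 2 * rr p) : ℝ), (-(p 3) / (Real.sqrt 2 * rr p) : ℝ)]

set_option maxHeartbeats 1600000 in
/-- If `f` is Minkowski-transversal at a point `p` of the forward light cone,
then in the eigenbasis decomposition `f = a w₁⁺ + b w₁⁻ + c w_{r⁻²} + d w_{r²}`
the Krein quantity `-f̄_μ f^μ = -⟨f, 𝔍 f⟩` equals `|a|² + |b|²`; in particular
it is nonnegative. -/
theorem transversal_krein_norm (p : Fin 4 → ℝ)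
    (hcone : p 0 = rr p) (hr : 0 < rr p) (hrho : (p 1) ^ 2 + (p 2) ^ 2 ≠ 0)
    (f : Fin 4 → ℂ) (a b c d : ℂ)
    (hdec : f = a • w1plus p + b • w1minus p + c • wrinv p + d • wr p)
    (htr : (p 0 : ℂ) * f 0 - (p 1 : ℂ) * f 1 - (p 2 : ℂ) * f 2 - (p 3 : ℂ) * f 3 = 0) :
    -((starRingEnd ℂ) (f 0) * f 0 - (starRingEnd ℂ) (f 1) * f 1
        - (starRingEnd ℂ) (f 2) * f 2 - (starRingEnd ℂ) (f 3) * f 3)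
      = (Complex.normSq a + Complex.normSq b : ℝ) ∧
    (0 : ℂ) ≤ -((starRingEnd ℂ) (f 0) * f 0 - (starRingEnd ℂ) (f 1) * f 1
        - (starRingEnd ℂ) (f 2) * f 2 - (starRingEnd ℂ) (f 3) * f 3) := by
  have hρnn : (0:ℝ) ≤ p 1 ^ 2 + p 2 ^ 2 := by positivity
  have hρpos : 0 < rho p := Real.sqrt_pos.mpr (lt_of_le_of_ne hρnn (Ne.symm hrho))
  have hρ2 : rho p ^ 2 = p 1 ^ 2 + p 2 ^ 2 := Real.sq_sqrt hρnn
  have hr2 : rr p ^ 2 = p 1 ^ 2 + p 2 ^ 2 + p 3 ^ 2 := Real.sq_sqrt (by positivity)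
  have hs2 : Real.sqrt 2 ^ 2 = 2 := Real.sq_sqrt (by norm_num)
  have hspos : (0:ℝ) < Real.sqrt 2 := Real.sqrt_pos.mpr (by norm_num)
  have Hρ : ((rho p : ℝ) : ℂ) ^ 2 = (p 1 : ℂ) ^ 2 + (p 2 : ℂ) ^ 2 := by
    exact_mod_cast congrArg Complex.ofReal hρ2
  have Hr : ((rr p : ℝ) : ℂ) ^ 2 = (p 1 : ℂ) ^ 2 + (p 2 : ℂ) ^ 2 + (p 3 : ℂ) ^ 2 := by
    exact_mod_cast congrArg Complex.ofReal hr2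
  have Hs : ((Real.sqrt 2 : ℝ) : ℂ) ^ 2 = 2 := by exact_mod_cast congrArg Complex.ofReal hs2
  have Hρ0 : ((rho p : ℝ) : ℂ) ≠ 0 := Complex.ofReal_ne_zero.mpr hρpos.ne'
  have Hr0 : ((rr p : ℝ) : ℂ) ≠ 0 := Complex.ofReal_ne_zero.mpr hr.ne'
  have Hs0 : ((Real.sqrt 2 : ℝ) : ℂ) ≠ 0 := Complex.ofReal_ne_zero.mpr hspos.ne'
  have hf0 : f 0 = c * (1 / ((Real.sqrt 2 : ℝ) : ℂ)) + d * (1 / ((Real.sqrt 2 : ℝ) : ℂ)) := by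
    rw [hdec]
    simp only [Pi.add_apply, Pi.smul_apply, smul_eq_mul, w1plus, w1minus, wrinv, wr,
      Matrix.cons_val_zero]
    push_cast
    ring
  have hf1 : f 1 = a * ((p 2 : ℂ) / (rho p : ℝ))
      + b * ((p 1 : ℂ) * (p 3 : ℂ) / (((rho p : ℝ) : ℂ) * ((rr p : ℝ) : ℂ)))
      + c * ((p 1 : ℂ) / (((Real.sqrt 2 : ℝ) : ℂ) * ((rr p : ℝ) : ℂ)))
      - d * ((p 1 : ℂ) / (((Real.sqrt 2 : ℝ) : ℂ) * ((rr p : ℝ) : ℂ))) := by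
    rw [hdec]
    simp only [Pi.add_apply, Pi.smul_apply, smul_eq_mul, w1plus, w1minus, wrinv, wr,
      Matrix.cons_val_one, Matrix.head_cons]
    push_cast
    ring
  have hf2 : f 2 = - a * ((p 1 : ℂ) / (rho p : ℝ))
      + b * ((p 2 : ℂ) * (p 3 : ℂ) / (((rho p : ℝ) : ℂ) * ((rr p : ℝ) : ℂ)))
      + c * ((p 2 : ℂ) / (((Real.sqrt 2 : ℝ) : ℂ) * ((rr p : ℝ) : ℂ)))
      - d * ((p 2 : ℂ) / (((Real.sqrt 2 : ℝ) : ℂ) * ((rr p : ℝ) : ℂ))) := by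
    rw [hdec]
    simp only [Pi.add_apply, Pi.smul_apply, smul_eq_mul, w1plus, w1minus, wrinv, wr,
      Matrix.cons_val_two, Matrix.tail_cons, Matrix.head_cons]
    push_cast
    ring
  have hf3 : f 3 = - b * (((rho p : ℝ) : ℂ) / ((rr p : ℝ) : ℂ))
      + c * ((p 3 : ℂ) / (((Real.sqrt 2 : ℝ) : ℂ) * ((rr p : ℝ) : ℂ)))
      - d * ((p 3 : ℂ) / (((Real.sqrt 2 : ℝ) : ℂ) * ((rr p : ℝ) : ℂ))) := by
    rw [hdec]
    simp only [Pi.add_apply, Pi.smul_apply, smul_eq_mul, w1plus, w1minus, wrinv, wr,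
      Matrix.cons_val_three, Matrix.tail_cons, Matrix.head_cons]
    push_cast
    ring
  rw [hcone, hf0, hf1, hf2, hf3] at htr
  push_cast at htr
  have hd : d = 0 := by
    have key : d * (((Real.sqrt 2 : ℝ) : ℂ) * ((rr p : ℝ) : ℂ)) = 0 := by
      linear_combination (norm := (field_simp; ring1)) htr - (b * (p 3 : ℂ) / (((rho p : ℝ) : ℂ) * ((rr p : ℝ) : ℂ))) * Hρ
        - ((c - d) / (((Real.sqrt 2 : ℝ) : ℂ) * ((rr p : ℝ) : ℂ))) * Hr
        + (d * ((rr p : ℝ) : ℂ) / ((Real.sqrt 2 : ℝ) : ℂ)) * Hs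
    rcases mul_eq_zero.mp key with h | h
    · exact h
    · exact absurd h (mul_ne_zero Hs0 Hr0)
  subst hd
  have hmain : -((starRingEnd ℂ) (f 0) * f 0 - (starRingEnd ℂ) (f 1) * f 1
        - (starRingEnd ℂ) (f 2) * f 2 - (starRingEnd ℂ) (f 3) * f 3)
      = ((Complex.normSq a + Complex.normSq b : ℝ) : ℂ) := by
    rw [hf0, hf1, hf2, hf3]
    simp only [map_add, map_sub, map_mul, map_neg, map_div₀, map_one, Complex.conj_ofReal,
      mul_zero, zero_mul, add_zero, sub_zero]
    push_cast
    rw [← Complex.mul_conj, ← Complex.mul_conj]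
    linear_combination (norm := (field_simp; ring1)) (-(a * (starRingEnd ℂ) a) / ((rho p : ℝ) : ℂ) ^ 2
        - (b * (starRingEnd ℂ) b) * (p 3 : ℂ) ^ 2 / (((rho p : ℝ) : ℂ) ^ 2 * ((rr p : ℝ) : ℂ) ^ 2)
        + (b * (starRingEnd ℂ) b) / ((rr p : ℝ) : ℂ) ^ 2
        - (((starRingEnd ℂ) b) * c + b * ((starRingEnd ℂ) c)) * (p 3 : ℂ)
            / (((rho p : ℝ) : ℂ) * ((Real.sqrt 2 : ℝ) : ℂ) * ((rr p : ℝ) : ℂ) ^ 2)) * Hρ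
      + (-(b * (starRingEnd ℂ) b) / ((rr p : ℝ) : ℂ) ^ 2
        - (c * (starRingEnd ℂ) c) / (((Real.sqrt 2 : ℝ) : ℂ) ^ 2 * ((rr p : ℝ) : ℂ) ^ 2)) * Hr
  refine ⟨hmain, ?_⟩
  rw [hmain]
  exact Complex.zero_le_real.mpr (add_nonneg (Complex.normSq_nonneg a) (Complex.normSq_nonneg b))

end
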